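/- arXiv:2505.10920 — 2 statements merged into one kernel-verified Lean document; each statement's English description precedes it below -/
import Mathlib

section
/- Let k be a commutative ring and G a finite group. An acyclic complex F of flat kG-modules is totally acyclic (i.e., I ⊗_{kG} F is acyclic for every injective kG-module I) if and only if the underlying acyclic complex of flat k-modules res_1^G F is totally acyclic (i.e., J ⊗_k F is acyclic for every injective k-module J). -/
universe u

open MulOpposite
open scoped TensorProduct

noncomputable section

/-! ### Complexes of modules over a ring -/

/-- A `ℤ`-indexed chain complex of `R`-modules, given by its components and differentials. -/
structure RComplex (R : Type u) [Ring R] : Type (u + 1) where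
  /-- the components of the complex -/
  X : ℤ → ModuleCat.{u} R
  /-- the differentials of the complex -/
  d : ∀ n : ℤ, X (n + 1) →ₗ[R] X n
  /-- the composite of two consecutive differentials vanishes -/
  dsq : ∀ n : ℤ, (d n).comp (d (n + 1)) = 0

/-! ### Tensor product with a right module over a possibly noncommutative ring -/

section NCTensor

variable (R : Type u) [Ring R] (J : Type u) [AddCommGroup J] [Module Rᵐᵒᵖ J]

/-- The subgroup of `J ⊗_ℤ M` by which one quotients to obtain `J ⊗_R M`. -/
def ncTensorRel (M : Type u) [AddCommGroup M] [Module R M] :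
    AddSubgroup (TensorProduct ℤ J M) :=
  AddSubgroup.closure
    {x | ∃ (r : R) (j : J) (m : M), x = (op r • j) ⊗ₜ[ℤ] m - j ⊗ₜ[ℤ] (r • m)}

/-- The tensor product `J ⊗_R M` of a right `R`-module `J` and a left `R`-module `M`
(over a possibly noncommutative ring `R`), as an abelian group. -/
abbrev NCTensor (M : Type u) [AddCommGroup M] [Module R M] : Type u :=
  TensorProduct ℤ J M ⧸ ncTensorRel R J M

variable {M N : Type u} [AddCommGroup M] [Module R M] [AddCommGroup N] [Module R N]

/-- Functoriality of `J ⊗_R −` in the left module variable. -/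
def ncTensorMap (f : M →ₗ[R] N) : NCTensor R J M →+ NCTensor R J N :=
  QuotientAddGroup.map _ _
    (LinearMap.lTensor J f.toAddMonoidHom.toIntLinearMap).toAddMonoidHom
    (by
      rw [ncTensorRel, AddSubgroup.closure_le]
      rintro x ⟨r, j, m, rfl⟩
      simp only [SetLike.mem_coe, AddSubgroup.mem_comap, map_sub,
        LinearMap.toAddMonoidHom_coe, LinearMap.lTensor_tmul,
        AddMonoidHom.coe_toIntLinearMap, map_smul]
      exact AddSubgroup.subset_closure ⟨r, j, f m, rfl⟩)

/-- Functoriality of `− ⊗_R M` in the right module variable. -/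
def ncTensorMapRight {A B : Type u} [AddCommGroup A] [Module Rᵐᵒᵖ A]
    [AddCommGroup B] [Module Rᵐᵒᵖ B] (g : A →ₗ[Rᵐᵒᵖ] B)
    (M : Type u) [AddCommGroup M] [Module R M] :
    NCTensor R A M →+ NCTensor R B M :=
  QuotientAddGroup.map _ _
    (LinearMap.rTensor M g.toAddMonoidHom.toIntLinearMap).toAddMonoidHom
    (by
      rw [ncTensorRel, AddSubgroup.closure_le]
      rintro x ⟨r, j, m, rfl⟩
      simp only [SetLike.mem_coe, AddSubgroup.mem_comap, map_sub,
        LinearMap.toAddMonoidHom_coe, LinearMap.rTensor_tmul,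
        AddMonoidHom.coe_toIntLinearMap, map_smul]
      exact AddSubgroup.subset_closure ⟨r, g j, m, rfl⟩)

end NCTensor

/-- A left module `M` over a (possibly noncommutative) ring `R` is flat if the functor
`− ⊗_R M` preserves injectivity of maps of right `R`-modules. -/
def ModFlat (R : Type u) [Ring R] (M : Type u) [AddCommGroup M] [Module R M] : Prop :=
  ∀ (A B : Type u) [AddCommGroup A] [Module Rᵐᵒᵖ A] [AddCommGroup B] [Module Rᵐᵒᵖ B]
    (g : A →ₗ[Rᵐᵒᵖ] B), Function.Injective g →
      Function.Injective ⇑(ncTensorMapRight R g M)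


namespace RComplex

variable {R : Type u} [Ring R]

/-- A complex is acyclic (= exact) if it is exact at every spot. -/
def Acyclic (C : RComplex R) : Prop :=
  ∀ n : ℤ, Function.Exact ⇑(C.d (n + 1)) ⇑(C.d n)

/-- All components of the complex are flat modules. -/
def FlatComps (C : RComplex R) : Prop :=
  ∀ n : ℤ, ModFlat R (C.X n)

/-- All components of the complex are projective modules. -/
def ProjComps (C : RComplex R) : Prop :=
  ∀ n : ℤ, Module.Projective R (C.X n)

/-- All components of the complex are injective modules. -/
def InjComps (C : RComplex R) : Prop :=
  ∀ n : ℤ, Module.Injective R (C.X n)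

/-- `M` is (isomorphic to) a cokernel of one of the differentials of `C`. -/
def CokerOf (C : RComplex R) (M : Type u) [AddCommGroup M] [Module R M] : Prop :=
  ∃ n : ℤ, Nonempty (((C.X n) ⧸ LinearMap.range (C.d n)) ≃ₗ[R] M)

/-- `M` is (isomorphic to) a kernel of one of the differentials of `C`. -/
def KerOf (C : RComplex R) (M : Type u) [AddCommGroup M] [Module R M] : Prop :=
  ∃ n : ℤ, Nonempty ((LinearMap.ker (C.d n)) ≃ₗ[R] M)

end RComplex

namespace RComplex

variable {R : Type u} [Ring R]

/-- The complex `J ⊗_R C` of abelian groups is acyclic. -/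
def TensorAcyclic (C : RComplex R) (J : Type u) [AddCommGroup J] [Module Rᵐᵒᵖ J] : Prop :=
  ∀ n : ℤ, Function.Exact ⇑(ncTensorMap R J (C.d (n + 1))) ⇑(ncTensorMap R J (C.d n))

end RComplex

/-! ### Hom functors applied to complexes -/

section HomMaps

variable {R : Type u} [Ring R]

/-- Precomposition with `f`, as a map `Hom_R(N, P) → Hom_R(M, P)` of abelian groups. -/
def precompAM (P : Type u) [AddCommGroup P] [Module R P]
    {M N : Type u} [AddCommGroup M] [Module R M] [AddCommGroup N] [Module R N]
    (f : M →ₗ[R] N) : (N →ₗ[R] P) →+ (M →ₗ[R] P) where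
  toFun g := g.comp f
  map_zero' := by ext x; simp
  map_add' g₁ g₂ := by ext x; simp

/-- Postcomposition with `f`, as a map `Hom_R(I, M) → Hom_R(I, N)` of abelian groups. -/
def postcompAM (I : Type u) [AddCommGroup I] [Module R I]
    {M N : Type u} [AddCommGroup M] [Module R M] [AddCommGroup N] [Module R N]
    (f : M →ₗ[R] N) : (I →ₗ[R] M) →+ (I →ₗ[R] N) where
  toFun g := f.comp g
  map_zero' := by ext x; simp
  map_add' g₁ g₂ := by ext x; simp

namespace RComplex

/-- The complex `Hom_R(C, P)` of abelian groups is acyclic. -/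
def HomToAcyclic (C : RComplex R) (P : Type u) [AddCommGroup P] [Module R P] : Prop :=
  ∀ n : ℤ, Function.Exact ⇑(precompAM P (C.d n)) ⇑(precompAM P (C.d (n + 1)))

/-- The complex `Hom_R(I, C)` of abelian groups is acyclic. -/
def HomFromAcyclic (C : RComplex R) (I : Type u) [AddCommGroup I] [Module R I] : Prop :=
  ∀ n : ℤ, Function.Exact ⇑(postcompAM I (C.d (n + 1))) ⇑(postcompAM I (C.d n))

/-- A totally acyclic complex of flat modules: an acyclic complex of flat modules which stays
acyclic after applying `J ⊗_R −` for every injective right `R`-module `J`. -/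
def TotallyAcyclicFlat (C : RComplex R) : Prop :=
  C.Acyclic ∧ C.FlatComps ∧
    ∀ (J : Type u) [AddCommGroup J] [Module Rᵐᵒᵖ J],
      Module.Injective Rᵐᵒᵖ J → C.TensorAcyclic J

/-- An acyclic complex of projective modules which stays acyclic after applying `J ⊗_R −`
for every injective right `R`-module `J`. -/
def PGFComplex (C : RComplex R) : Prop :=
  C.Acyclic ∧ C.ProjComps ∧
    ∀ (J : Type u) [AddCommGroup J] [Module Rᵐᵒᵖ J],
      Module.Injective Rᵐᵒᵖ J → C.TensorAcyclic J

/-- A totally acyclic complex of projective modules: an acyclic complex of projective modules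
which stays acyclic after applying `Hom_R(−, P)` for every projective module `P`. -/
def TotallyAcyclicProj (C : RComplex R) : Prop :=
  C.Acyclic ∧ C.ProjComps ∧
    ∀ (P : Type u) [AddCommGroup P] [Module R P],
      Module.Projective R P → C.HomToAcyclic P

/-- A totally acyclic complex of injective modules: an acyclic complex of injective modules
which stays acyclic after applying `Hom_R(I, −)` for every injective module `I`. -/
def TotallyAcyclicInj (C : RComplex R) : Prop :=
  C.Acyclic ∧ C.InjComps ∧
    ∀ (I : Type u) [AddCommGroup I] [Module R I],
      Module.Injective R I → C.HomFromAcyclic I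

end RComplex

end HomMaps

/-! ### The classes `P(R)`, `F(R)`, `I(R)` and the Gorenstein module classes -/

section Classes

variable (R : Type u) [Ring R] (M : Type u) [AddCommGroup M] [Module R M]

/-- `M ∈ P(R)`: `M` is a cokernel of a differential of an acyclic complex of projectives. -/
def MemP : Prop :=
  ∃ C : RComplex R, C.Acyclic ∧ C.ProjComps ∧ C.CokerOf M

/-- `M ∈ F(R)`: `M` is a cokernel of a differential of an acyclic complex of flats. -/
def MemF : Prop :=
  ∃ C : RComplex R, C.Acyclic ∧ C.FlatComps ∧ C.CokerOf M

/-- `M ∈ I(R)`: `M` is a kernel of a differential of an acyclic complex of injectives. -/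
def MemI : Prop :=
  ∃ C : RComplex R, C.Acyclic ∧ C.InjComps ∧ C.KerOf M

/-- `M` is projectively coresolved Gorenstein flat. -/
def IsPGF : Prop :=
  ∃ C : RComplex R, C.PGFComplex ∧ C.CokerOf M

/-- `M` is Gorenstein flat. -/
def IsGFlat : Prop :=
  ∃ C : RComplex R, C.TotallyAcyclicFlat ∧ C.CokerOf M

/-- `M` is Gorenstein projective. -/
def IsGProj : Prop :=
  ∃ C : RComplex R, C.TotallyAcyclicProj ∧ C.CokerOf M

/-- `M` is Gorenstein injective. -/
def IsGInj : Prop :=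
  ∃ C : RComplex R, C.TotallyAcyclicInj ∧ C.KerOf M

end Classes

/-! ### Ext-orthogonality (via splitting of extensions) and cotorsion pairs -/

section Ext

variable (R : Type u) [Ring R]

/-- `Ext¹_R(A, B) = 0`, expressed by the splitting of all extensions of `A` by `B`. -/
def Ext1Vanish (A : Type u) [AddCommGroup A] [Module R A]
    (B : Type u) [AddCommGroup B] [Module R B] : Prop :=
  ∀ (E : ModuleCat.{u} R) (i : B →ₗ[R] E) (p : E →ₗ[R] A),
    Function.Injective i → Function.Surjective p → Function.Exact ⇑i ⇑p →
      ∃ s : A →ₗ[R] E, p.comp s = LinearMap.id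

/-- `L` is a cotorsion module. -/
def IsCotorsion (L : Type u) [AddCommGroup L] [Module R L] : Prop :=
  ∀ (F : Type u) [AddCommGroup F] [Module R F], ModFlat R F → Ext1Vanish R F L

/-- `N` belongs to the right `Ext¹`-orthogonal of the class of Gorenstein projective modules. -/
def GProjPerp (N : Type u) [AddCommGroup N] [Module R N] : Prop :=
  ∀ (U : Type u) [AddCommGroup U] [Module R U], IsGProj R U → Ext1Vanish R U N

/-- The pair `(GProj(R), GProj(R)^⊥)` is a complete cotorsion pair. -/
def GProjPairComplete : Prop :=
  (∀ (M : Type u) [AddCommGroup M] [Module R M],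
      IsGProj R M ↔
        ∀ (N : Type u) [AddCommGroup N] [Module R N], GProjPerp R N → Ext1Vanish R M N) ∧
  ∀ (M : Type u) [AddCommGroup M] [Module R M],
    (∃ (U V : ModuleCat.{u} R) (i : V →ₗ[R] U) (p : U →ₗ[R] M),
        IsGProj R U ∧ GProjPerp R V ∧
          Function.Injective i ∧ Function.Surjective p ∧ Function.Exact ⇑i ⇑p) ∧
    (∃ (V' U' : ModuleCat.{u} R) (i : M →ₗ[R] V') (p : V' →ₗ[R] U'),
        GProjPerp R V' ∧ IsGProj R U' ∧
          Function.Injective i ∧ Function.Surjective p ∧ Function.Exact ⇑i ⇑p)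

end Ext

/-! ### Homological dimensions -/

section Dims

variable (R : Type u) [Ring R]

/-- The injective dimension of `M` is at most `n`. -/
def injDimLE : ℕ → ModuleCat.{u} R → Prop
  | 0, M => Module.Injective R M
  | n + 1, M =>
      ∃ (I : ModuleCat.{u} R) (f : M →ₗ[R] I),
        Function.Injective f ∧ Module.Injective R I ∧
          injDimLE n (ModuleCat.of R (I ⧸ LinearMap.range f))

/-- The flat dimension of `M` is at most `n`. -/
def flatDimLE : ℕ → ModuleCat.{u} R → Prop
  | 0, M => ModFlat R M
  | n + 1, M =>
      ∃ (F : ModuleCat.{u} R) (f : F →ₗ[R] M),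
        Function.Surjective f ∧ ModFlat R F ∧
          flatDimLE n (ModuleCat.of R (LinearMap.ker f))

/-- The projective dimension of `M` is at most `n`. -/
def projDimLE : ℕ → ModuleCat.{u} R → Prop
  | 0, M => Module.Projective R M
  | n + 1, M =>
      ∃ (F : ModuleCat.{u} R) (f : F →ₗ[R] M),
        Function.Surjective f ∧ Module.Projective R F ∧
          projDimLE n (ModuleCat.of R (LinearMap.ker f))

/-- The Gorenstein flat dimension of `M` is at most `n`. -/
def gflatDimLE : ℕ → ModuleCat.{u} R → Prop
  | 0, M => IsGFlat R M
  | n + 1, M =>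
      ∃ (F : ModuleCat.{u} R) (f : F →ₗ[R] M),
        Function.Surjective f ∧ IsGFlat R F ∧
          gflatDimLE n (ModuleCat.of R (LinearMap.ker f))

variable (M : Type u) [AddCommGroup M] [Module R M]

/-- `M` has finite injective dimension. -/
def HasFinInjDim : Prop := ∃ n : ℕ, injDimLE R n (ModuleCat.of R M)

/-- `M` has finite flat dimension. -/
def HasFinFlatDim : Prop := ∃ n : ℕ, flatDimLE R n (ModuleCat.of R M)

/-- `M` has finite projective dimension. -/
def HasFinProjDim : Prop := ∃ n : ℕ, projDimLE R n (ModuleCat.of R M)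

end Dims

/-- Every acyclic complex of injective `R`-modules is totally acyclic. -/
def InjAcyclicTotal (R : Type u) [Ring R] : Prop :=
  ∀ C : RComplex R, C.Acyclic → C.InjComps →
    ∀ (I : Type u) [AddCommGroup I] [Module R I],
      Module.Injective R I → C.HomFromAcyclic I

/-! ### Group algebras -/

section GroupAlgebra

variable (k : Type u) [CommRing k] (G : Type u) [Group G]

/-- The ring homomorphism `kH → kG` induced by the inclusion of a subgroup `H ⊆ G`. -/
def resHom (H : Subgroup G) : MonoidAlgebra k ↥H →+* MonoidAlgebra k G :=
  MonoidAlgebra.mapDomainRingHom k H.subtype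

/-- The antipode `kG → (kG)ᵐᵒᵖ`, induced by `g ↦ g⁻¹`. -/
def antipodeHom : MonoidAlgebra k G →+* (MonoidAlgebra k G)ᵐᵒᵖ :=
  (MonoidAlgebra.lift k (MonoidAlgebra k G)ᵐᵒᵖ G
    { toFun := fun g => op (MonoidAlgebra.of k G g⁻¹)
      map_one' := by simp [MonoidAlgebra.one_def]
      map_mul' := fun g h => by
        simp [mul_inv_rev, ← op_mul, ← map_mul] }).toRingHom

/-- The "unop-unop" ring homomorphism. -/
def unopUnopRingHom (R : Type u) [Ring R] : Rᵐᵒᵖᵐᵒᵖ →+* R where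
  toFun x := x.unop.unop
  map_one' := rfl
  map_mul' _ _ := rfl
  map_zero' := rfl
  map_add' _ _ := rfl

/-- The antipode `(kG)ᵐᵒᵖ → kG`, induced by `g ↦ g⁻¹`. -/
def antipodeOpHom : (MonoidAlgebra k G)ᵐᵒᵖ →+* MonoidAlgebra k G :=
  (unopUnopRingHom (MonoidAlgebra k G)).comp (RingHom.op (antipodeHom k G))

/-- A left `kG`-module, viewed as a right `kG`-module via `g ↦ g⁻¹`. -/
def rightModuleOfLeft (M : Type u) [AddCommGroup M] [Module (MonoidAlgebra k G) M] :
    Module (MonoidAlgebra k G)ᵐᵒᵖ M :=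
  Module.compHom M (antipodeOpHom k G)

end GroupAlgebra

/-! ### Restriction of scalars for complexes -/

/-- Restriction of scalars of a complex along a ring homomorphism. -/
def RComplex.res {A B : Type u} [Ring A] [Ring B] (φ : A →+* B) (C : RComplex B) :
    RComplex A where
  X n := (ModuleCat.restrictScalars φ).obj (C.X n)
  d n := ((ModuleCat.restrictScalars φ).map (ModuleCat.ofHom (C.d n))).hom
  dsq n := by ext x; exact DFunLike.congr_fun (C.dsq n) x

namespace RComplex

/-- Total acyclicity for a complex over a commutative ring: the complex `J ⊗_k C` is acyclic
for every injective `k`-module `J`. -/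
def CTensorAcyclic {k : Type u} [CommRing k] (C : RComplex k) : Prop :=
  ∀ (J : Type u) [AddCommGroup J] [Module k J], Module.Injective k J →
    ∀ n : ℤ, Function.Exact ⇑(LinearMap.lTensor J (C.d (n + 1))) ⇑(LinearMap.lTensor J (C.d n))

/-- Total acyclicity for a complex of `kG`-modules, with injective right `kG`-modules
identified with injective left `kG`-modules via `g ↦ g⁻¹`: the complex `I ⊗_{kG} C` is acyclic
for every injective `kG`-module `I`. -/
def GTensorAcyclic (k : Type u) [CommRing k] (G : Type u) [Group G]
    (C : RComplex (MonoidAlgebra k G)) : Prop :=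
  ∀ (I : Type u) [AddCommGroup I] [Module (MonoidAlgebra k G) I],
    Module.Injective (MonoidAlgebra k G) I →
      letI := rightModuleOfLeft k G I
      C.TensorAcyclic I

end RComplex

/-! ### Pontryagin duality -/

/-- The Pontryagin dual `Hom_ℤ(M, ℚ/ℤ)` of an abelian group `M`. -/
abbrev PDual (M : Type u) [AddCommGroup M] : Type u := M →+ AddCircle (1 : ℚ)

/-- The natural right `R`-module structure on the Pontryagin dual of a left `R`-module. -/
def pdualRightModule (R : Type u) [Ring R] (M : Type u) [AddCommGroup M] [Module R M] :
    Module Rᵐᵒᵖ (PDual M) where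
  smul a f := f.comp (DistribMulAction.toAddMonoidHom M a.unop)
  one_smul f := by
    ext m
    show f ((1 : Rᵐᵒᵖ).unop • m) = f m
    rw [unop_one, one_smul]
  mul_smul a b f := by
    ext m
    show f ((a * b).unop • m) = f (b.unop • a.unop • m)
    rw [unop_mul, mul_smul]
  smul_zero a := by ext m; rfl
  smul_add a f g := by ext m; rfl
  add_smul a b f := by
    ext m
    show f ((a + b).unop • m) = f (a.unop • m) + f (b.unop • m)
    rw [unop_add, add_smul, map_add]
  zero_smul f := by
    ext m
    show f ((0 : Rᵐᵒᵖ).unop • m) = 0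
    rw [unop_zero, zero_smul, map_zero]

/-- The left `kG`-module structure, via `g ↦ g⁻¹`, on the Pontryagin dual of a
left `kG`-module. -/
def pdualLeftModule (k : Type u) [CommRing k] (G : Type u) [Group G]
    (M : Type u) [AddCommGroup M] [Module (MonoidAlgebra k G) M] :
    Module (MonoidAlgebra k G) (PDual M) :=
  letI := pdualRightModule (MonoidAlgebra k G) M
  Module.compHom (PDual M) (antipodeHom k G)

/-! ### Diagonal actions -/

section Diagonal

variable (k : Type u) [CommRing k] (G : Type u) [Group G]
variable (M : Type u) [AddCommGroup M] [Module k M] [Module (MonoidAlgebra k G) M]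
  [IsScalarTower k (MonoidAlgebra k G) M]

/-- The `k`-linear action of `g : G` on a `kG`-module. -/
def gEnd (g : G) : M →ₗ[k] M where
  toFun m := MonoidAlgebra.of k G g • m
  map_add' := smul_add _
  map_smul' c m := by
    simp only [RingHom.id_apply]
    exact (smul_comm c (MonoidAlgebra.of k G g) m).symm

variable (N : Type u) [AddCommGroup N] [Module k N] [Module (MonoidAlgebra k G) N]
  [IsScalarTower k (MonoidAlgebra k G) N]

/-- The diagonal action of `G` on `M ⊗_k N`, as a monoid homomorphism to endomorphisms. -/
def diagEnd : G →* Module.End k (TensorProduct k M N) where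
  toFun g := TensorProduct.map (gEnd k G M g) (gEnd k G N g)
  map_one' := by
    have hM : gEnd k G M 1 = LinearMap.id := by
      ext m
      show MonoidAlgebra.of k G 1 • m = m
      rw [map_one, one_smul]
    have hN : gEnd k G N 1 = LinearMap.id := by
      ext m
      show MonoidAlgebra.of k G 1 • m = m
      rw [map_one, one_smul]
    show TensorProduct.map _ _ = _
    rw [hM, hN, TensorProduct.map_id]
    rfl
  map_mul' g h := by
    have hM : gEnd k G M (g * h) = (gEnd k G M g).comp (gEnd k G M h) := by
      ext m
      show MonoidAlgebra.of k G (g * h) • m = MonoidAlgebra.of k G g • MonoidAlgebra.of k G h • m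
      rw [map_mul, mul_smul]
    have hN : gEnd k G N (g * h) = (gEnd k G N g).comp (gEnd k G N h) := by
      ext m
      show MonoidAlgebra.of k G (g * h) • m = MonoidAlgebra.of k G g • MonoidAlgebra.of k G h • m
      rw [map_mul, mul_smul]
    show TensorProduct.map _ _ = _
    rw [hM, hN, TensorProduct.map_comp]
    rfl

/-- The diagonal `kG`-module structure on `M ⊗_k N`. -/
def diagModule : Module (MonoidAlgebra k G) (TensorProduct k M N) :=
  Module.compHom (TensorProduct k M N)
    ((MonoidAlgebra.lift k (Module.End k (TensorProduct k M N)) G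
      (diagEnd k G M N)).toRingHom)

end Diagonal

/-! ### The group classes `X(k)`, `Y(k)`, `Z(k)` -/

/-- `Γ ∈ X(k)` (projective form): every `kΓ`-module in `P(kΓ)` is PGF. -/
def XPropP (k : Type u) [CommRing k] (Γ : Type u) [Group Γ] : Prop :=
  ∀ (M : Type u) [AddCommGroup M] [Module (MonoidAlgebra k Γ) M],
    MemP (MonoidAlgebra k Γ) M → IsPGF (MonoidAlgebra k Γ) M

/-- `Γ ∈ X(k)` (flat form): every `kΓ`-module in `F(kΓ)` is Gorenstein flat. -/
def XPropF (k : Type u) [CommRing k] (Γ : Type u) [Group Γ] : Prop :=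
  ∀ (M : Type u) [AddCommGroup M] [Module (MonoidAlgebra k Γ) M],
    MemF (MonoidAlgebra k Γ) M → IsGFlat (MonoidAlgebra k Γ) M

/-- `Γ ∈ Y(k)`: every acyclic complex of injective `kΓ`-modules is totally acyclic. -/
def YProp (k : Type u) [CommRing k] (Γ : Type u) [Group Γ] : Prop :=
  InjAcyclicTotal (MonoidAlgebra k Γ)

/-- `Γ ∈ Z(k)`: `Γ ∈ Y(k)` and every `kΓ`-module whose Pontryagin dual is Gorenstein
injective is Gorenstein flat. -/
def ZProp (k : Type u) [CommRing k] (Γ : Type u) [Group Γ] : Prop :=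
  YProp k Γ ∧
    ∀ (M : Type u) [AddCommGroup M] [Module (MonoidAlgebra k Γ) M],
      (letI := pdualLeftModule k Γ M; IsGInj (MonoidAlgebra k Γ) (PDual M)) →
        IsGFlat (MonoidAlgebra k Γ) M

end

/-! ### Auxiliary material for Statement 0 -/

noncomputable section Statement0Aux

open MulOpposite
open scoped TensorProduct Classical

namespace Statement0Aux

set_option linter.unusedSectionVars false
set_option linter.dupNamespace false

variable (k : Type u) [CommRing k] (G : Type u) [Group G]

theorem algebraMap_eq_single (c : k) :
    algebraMap k (MonoidAlgebra k G) c = MonoidAlgebra.single 1 c := by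
  simp [MonoidAlgebra.coe_algebraMap]

theorem antipode_single (g : G) (c : k) :
    antipodeHom k G (MonoidAlgebra.single g c) = op (MonoidAlgebra.single g⁻¹ c) := by
  have h1 : (MonoidAlgebra.single g c : MonoidAlgebra k G) = c • MonoidAlgebra.of k G g := by
    simp [MonoidAlgebra.smul_single']
  have h2 : (MonoidAlgebra.single g⁻¹ c : MonoidAlgebra k G) = c • MonoidAlgebra.of k G g⁻¹ := by
    simp [MonoidAlgebra.smul_single']
  unfold antipodeHom
  rw [h1, AlgHom.toRingHom_eq_coe, RingHom.coe_coe, map_smul, MonoidAlgebra.lift_of]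
  simp only [MonoidHom.coe_mk, OneHom.coe_mk]
  rw [h2, op_smul]

theorem antipode_ksmul (c : k) (x : MonoidAlgebra k G) :
    antipodeHom k G (c • x) = c • antipodeHom k G x := by
  unfold antipodeHom
  rw [AlgHom.toRingHom_eq_coe, RingHom.coe_coe, map_smul]

theorem rmol_smul (M : Type u) [AddCommGroup M] [Module (MonoidAlgebra k G) M]
    (x : MonoidAlgebra k G) (m : M) :
    letI := rightModuleOfLeft k G M
    op x • m = (antipodeHom k G x).unop • m := rfl

/-- The coinduced module `Hom_k(kG, J)`, modeled as functions `G → J`. -/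
def Coind (_k G J : Type u) : Type u := G → J

variable (J : Type u) [AddCommGroup J] [Module k J]

instance : AddCommGroup (Coind k G J) := Pi.addCommGroup

instance : Module k (Coind k G J) := Pi.module _ _ _

variable {k G J}

/-- Constructor. -/
def Coind.mk (f : G → J) : Coind k G J := f

/-- Evaluation. -/
def Coind.app (f : Coind k G J) (g : G) : J := f g

theorem Coind.ext {f f' : Coind k G J} (h : ∀ g, f.app g = f'.app g) : f = f' := funext h

@[simp] theorem Coind.app_mk (f : G → J) (g : G) : (Coind.mk (k := k) f).app g = f g := rfl

@[simp] theorem Coind.app_add (f f' : Coind k G J) (g : G) :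
    (f + f').app g = f.app g + f'.app g := rfl

@[simp] theorem Coind.app_zero (g : G) : (0 : Coind k G J).app g = 0 := rfl

@[simp] theorem Coind.app_ksmul (c : k) (f : Coind k G J) (g : G) :
    (c • f).app g = c • f.app g := rfl

variable (k G J)

/-- Evaluation as an additive map. -/
def Coind.appHom (g : G) : Coind k G J →+ J where
  toFun f := f.app g
  map_zero' := rfl
  map_add' _ _ := rfl

/-- The `k`-linear action of `G` on the coinduced module. -/
def coindRho : G →* Module.End k (Coind k G J) where
  toFun g :=
    { toFun := fun f => Coind.mk fun h => f.app (h * g)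
      map_add' := fun _ _ => rfl
      map_smul' := fun _ _ => rfl }
  map_one' := LinearMap.ext fun f => Coind.ext fun h => by simp
  map_mul' g g' := LinearMap.ext fun f => Coind.ext fun h => by
    show f.app (h * (g * g')) = f.app ((h * g) * g'); rw [mul_assoc]

instance : Module (MonoidAlgebra k G) (Coind k G J) :=
  Module.compHom _ (MonoidAlgebra.lift k (Module.End k (Coind k G J)) G (coindRho k G J)).toRingHom

variable {k G J}

@[simp] theorem Coind.single_smul_app (g : G) (c : k) (f : Coind k G J) (h : G) :
    ((MonoidAlgebra.single g c : MonoidAlgebra k G) • f).app h = c • f.app (h * g) := by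
  have e : (MonoidAlgebra.single g c : MonoidAlgebra k G) • f
      = (MonoidAlgebra.lift k (Module.End k (Coind k G J)) G (coindRho k G J))
          (MonoidAlgebra.single g c) f := rfl
  rw [e, MonoidAlgebra.lift_single]
  rfl

theorem Coind.of_smul_app (g : G) (f : Coind k G J) (h : G) :
    (MonoidAlgebra.of k G g • f).app h = f.app (h * g) := by
  rw [show MonoidAlgebra.of k G g = (MonoidAlgebra.single g 1 : MonoidAlgebra k G) from rfl,
    Coind.single_smul_app, one_smul]

instance : IsScalarTower k (MonoidAlgebra k G) (Coind k G J) := by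
  constructor
  intro c x f
  show (MonoidAlgebra.lift k (Module.End k (Coind k G J)) G (coindRho k G J)) (c • x) f = _
  rw [map_smul]
  rfl

instance : Module (MonoidAlgebra k G)ᵐᵒᵖ (Coind k G J) := rightModuleOfLeft k G _

theorem Coind.op_smul (x : MonoidAlgebra k G) (f : Coind k G J) :
    op x • f = (antipodeHom k G x).unop • f := rfl

theorem Coind.op_single_smul_app (g : G) (c : k) (f : Coind k G J) (h : G) :
    (op (MonoidAlgebra.single g c : MonoidAlgebra k G) • f).app h = c • f.app (h * g⁻¹) := by
  rw [Coind.op_smul, antipode_single, unop_op, Coind.single_smul_app]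

theorem Coind.op_ksmul (c : k) (x : MonoidAlgebra k G) (f : Coind k G J) :
    op (c • x) • f = c • (op x • f) := by
  rw [Coind.op_smul, antipode_ksmul, unop_smul, smul_assoc, Coind.op_smul]

set_option linter.unusedSectionVars false
set_option linter.dupNamespace false

/-- Delta functions in the coinduced module. -/
def deltaAt (g₀ : G) (j : J) : Coind k G J := Coind.mk fun h => if h = g₀ then j else 0

theorem deltaAt_app (g₀ : G) (j : J) (h : G) :
    (deltaAt (k := k) g₀ j).app h = if h = g₀ then j else 0 := rfl

theorem deltaAt_add (g₀ : G) (j j' : J) :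
    deltaAt (k := k) g₀ (j + j') = deltaAt g₀ j + deltaAt g₀ j' := by
  refine Coind.ext fun h => ?_
  by_cases hh : h = g₀ <;> simp [deltaAt_app, hh]

theorem deltaAt_zero (g₀ : G) : deltaAt (k := k) (J := J) g₀ 0 = 0 := by
  refine Coind.ext fun h => ?_
  by_cases hh : h = g₀ <;> simp [deltaAt_app, hh]

theorem deltaAt_ksmul (g₀ : G) (c : k) (j : J) :
    deltaAt (k := k) g₀ (c • j) = c • deltaAt g₀ j := by
  refine Coind.ext fun h => ?_
  by_cases hh : h = g₀ <;> simp [deltaAt_app, hh]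

theorem op_of_smul_deltaAt (g : G) (j : J) :
    op (MonoidAlgebra.of k G g) • deltaAt (k := k) (1 : G) j = deltaAt g j := by
  refine Coind.ext fun h => ?_
  rw [show MonoidAlgebra.of k G g = (MonoidAlgebra.single g 1 : MonoidAlgebra k G) from rfl,
    Coind.op_single_smul_app, one_smul, deltaAt_app, deltaAt_app]
  by_cases hh : h = g
  · simp [hh]
  · rw [if_neg hh, if_neg]
    intro hc
    exact hh (by rwa [mul_inv_eq_one] at hc)

theorem sum_deltaAt [Fintype G] (f : Coind k G J) :
    ∑ g : G, deltaAt (k := k) g (f.app g) = f := by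
  refine Coind.ext fun h => ?_
  have e : (∑ g : G, deltaAt (k := k) g (f.app g)).app h
      = ∑ g : G, (deltaAt (k := k) g (f.app g)).app h :=
    map_sum (Coind.appHom k G J h) _ _
  rw [e]
  simp only [deltaAt_app]
  rw [Finset.sum_ite_eq]
  simp

section NC

variable {R : Type u} [Ring R]
variable {X Y : Type u} [AddCommGroup X] [Module Rᵐᵒᵖ X] [AddCommGroup Y] [Module Rᵐᵒᵖ Y]
variable {M N P : Type u} [AddCommGroup M] [Module R M] [AddCommGroup N] [Module R N]
  [AddCommGroup P] [Module R P]

theorem nc_mk_rel (r : R) (x : X) (m : M) :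
    (QuotientAddGroup.mk ((op r • x) ⊗ₜ[ℤ] m) : NCTensor R X M)
      = QuotientAddGroup.mk (x ⊗ₜ[ℤ] (r • m)) := by
  rw [QuotientAddGroup.eq]
  have h := AddSubgroup.neg_mem (ncTensorRel R X M)
    (AddSubgroup.subset_closure ⟨r, x, m, rfl⟩)
  rwa [neg_sub, sub_eq_neg_add] at h

theorem nc_ind {motive : NCTensor R X M → Prop} (zero : motive 0)
    (tmul : ∀ (x : X) (m : M), motive (QuotientAddGroup.mk (x ⊗ₜ[ℤ] m)))
    (add : ∀ a b, motive a → motive b → motive (a + b)) : ∀ q, motive q := by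
  intro q
  obtain ⟨t, rfl⟩ := QuotientAddGroup.mk_surjective q
  induction t using TensorProduct.induction_on with
  | zero => exact zero
  | tmul x m => exact tmul x m
  | add a b ha hb => exact add _ _ ha hb

@[simp] theorem ncTensorMap_mk (f : M →ₗ[R] N) (x : X) (m : M) :
    ncTensorMap R X f (QuotientAddGroup.mk (x ⊗ₜ[ℤ] m)) = QuotientAddGroup.mk (x ⊗ₜ[ℤ] f m) := rfl

@[simp] theorem ncTensorMapRight_mk (g : X →ₗ[Rᵐᵒᵖ] Y) (x : X) (m : M) :
    ncTensorMapRight R g M (QuotientAddGroup.mk (x ⊗ₜ[ℤ] m))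
      = QuotientAddGroup.mk (g x ⊗ₜ[ℤ] m) := rfl

theorem nc_mk_sum {ι : Type u} (s : Finset ι) (t : ι → TensorProduct ℤ X M) :
    (QuotientAddGroup.mk (∑ a ∈ s, t a) : NCTensor R X M)
      = ∑ a ∈ s, (QuotientAddGroup.mk (t a) : NCTensor R X M) :=
  map_sum (QuotientAddGroup.mk' (ncTensorRel R X M)) t s

theorem ncTensorMap_comp_apply (f : M →ₗ[R] N) (g : N →ₗ[R] P) (q : NCTensor R X M) :
    ncTensorMap R X g (ncTensorMap R X f q) = ncTensorMap R X (g.comp f) q := by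
  induction q using nc_ind with
  | zero => simp
  | tmul x m => simp
  | add a b ha hb => simp [ha, hb]

theorem ncTensorMap_zero_apply (q : NCTensor R X M) :
    ncTensorMap R X (0 : M →ₗ[R] N) q = 0 := by
  induction q using nc_ind with
  | zero => simp
  | tmul x m => simp [TensorProduct.tmul_zero]
  | add a b ha hb => simp [ha, hb]

theorem ncTensor_nat (g : X →ₗ[Rᵐᵒᵖ] Y) (f : M →ₗ[R] N) (q : NCTensor R X M) :
    ncTensorMap R Y f (ncTensorMapRight R g M q)
      = ncTensorMapRight R g N (ncTensorMap R X f q) := by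
  induction q using nc_ind with
  | zero => simp
  | tmul x m => simp
  | add a b ha hb => simp [ha, hb]

theorem ncTensorMapRight_retract {ε : X →ₗ[Rᵐᵒᵖ] Y} {r : Y →ₗ[Rᵐᵒᵖ] X}
    (hr : ∀ x, r (ε x) = x) (q : NCTensor R X M) :
    ncTensorMapRight R r M (ncTensorMapRight R ε M q) = q := by
  induction q using nc_ind with
  | zero => simp
  | tmul x m => simp [hr]
  | add a b ha hb => simp [ha, hb]

/-- Retract lemma: exactness of `Y ⊗ −` descends along a retract `X → Y → X`. -/
theorem exact_retract (ε : X →ₗ[Rᵐᵒᵖ] Y) (r : Y →ₗ[Rᵐᵒᵖ] X) (hr : ∀ x, r (ε x) = x)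
    (f : M →ₗ[R] N) (g : N →ₗ[R] P) (hfg : g.comp f = 0)
    (h : Function.Exact ⇑(ncTensorMap R Y f) ⇑(ncTensorMap R Y g)) :
    Function.Exact ⇑(ncTensorMap R X f) ⇑(ncTensorMap R X g) := by
  intro y
  constructor
  · intro hy
    have h1 : ncTensorMap R Y g (ncTensorMapRight R ε N y)
        = ncTensorMapRight R ε P (ncTensorMap R X g y) := ncTensor_nat ε g y
    rw [hy, map_zero] at h1
    obtain ⟨x, hx⟩ := (h _).mp h1
    refine ⟨ncTensorMapRight R r M x, ?_⟩
    rw [ncTensor_nat r f x, hx, ncTensorMapRight_retract hr]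
  · rintro ⟨x, rfl⟩
    rw [ncTensorMap_comp_apply, hfg, ncTensorMap_zero_apply]

end NC

/-- Transport of exactness along additive equivalences. -/
theorem exact_transport {A B C A' B' C' : Type u} [AddCommGroup A] [AddCommGroup B]
    [AddCommGroup C] [AddCommGroup A'] [AddCommGroup B'] [AddCommGroup C']
    (eA : A ≃+ A') (eB : B ≃+ B') (eC : C ≃+ C')
    {f : A → B} {g : B → C} {f' : A' → B'} {g' : B' → C'}
    (hf : ∀ a, f' (eA a) = eB (f a)) (hg : ∀ b, g' (eB b) = eC (g b))
    (h : Function.Exact f g) : Function.Exact f' g' := by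
  intro y'
  obtain ⟨y, rfl⟩ : ∃ y, eB y = y' := ⟨eB.symm y', by simp⟩
  rw [hg]
  constructor
  · intro h0
    have hgy : g y = 0 := by
      apply eC.injective
      rw [h0, map_zero]
    obtain ⟨x, hx⟩ := (h y).mp hgy
    exact ⟨eA x, by rw [hf, hx]⟩
  · rintro ⟨x', hx'⟩
    obtain ⟨x, rfl⟩ := eA.surjective x'
    rw [hf] at hx'
    have : f x = y := eB.injective hx'
    rw [(h y).mpr ⟨x, this⟩, map_zero]

section TensorIdentity

variable (k G J)
variable (M : Type u) [AddCommGroup M] [Module k M] [Module (MonoidAlgebra k G) M]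
  [IsScalarTower k (MonoidAlgebra k G) M]

theorem gsmul_ksmul (x : MonoidAlgebra k G) (c : k) (m : M) :
    x • (c • m) = c • (x • m) := by
  rw [← algebraMap_smul (MonoidAlgebra k G) c m, ← mul_smul, ← Algebra.commutes, mul_smul]
  exact congrArg (· • (x • m)) rfl |>.trans (algebraMap_smul (MonoidAlgebra k G) c (x • m))

variable [Fintype G]

/-- The underlying bilinear pairing of the tensor identity. -/
def tiPairing : Coind k G J →+ M →+ (J ⊗[k] M) where
  toFun f :=
    { toFun := fun m => ∑ g : G, f.app g ⊗ₜ[k] (MonoidAlgebra.of k G g • m)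
      map_zero' := by simp
      map_add' := fun m m' => by
        simp [smul_add, TensorProduct.tmul_add, Finset.sum_add_distrib] }
  map_zero' := by
    ext m
    simp
  map_add' f f' := by
    ext m
    simp [TensorProduct.add_tmul, Finset.sum_add_distrib]

@[simp] theorem tiPairing_apply (f : Coind k G J) (m : M) :
    tiPairing k G J M f m = ∑ g : G, f.app g ⊗ₜ[k] (MonoidAlgebra.of k G g • m) := rfl

theorem tiPairing_smul_left (c : k) (f : Coind k G J) (m : M) :
    tiPairing k G J M (c • f) m = c • tiPairing k G J M f m := by
  simp only [tiPairing_apply, Coind.app_ksmul]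
  rw [Finset.smul_sum]
  exact Finset.sum_congr rfl fun g _ => (TensorProduct.smul_tmul' c _ _).symm

theorem tiPairing_smul_right (c : k) (f : Coind k G J) (m : M) :
    tiPairing k G J M f (c • m) = c • tiPairing k G J M f m := by
  simp only [tiPairing_apply]
  rw [Finset.smul_sum]
  refine Finset.sum_congr rfl fun g _ => ?_
  rw [gsmul_ksmul k G M _ c m, TensorProduct.tmul_smul]

theorem tiPairing_balanced (r : MonoidAlgebra k G) (f : Coind k G J) (m : M) :
    tiPairing k G J M (op r • f) m = tiPairing k G J M f (r • m) := by
  induction r using MonoidAlgebra.induction_on with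
  | of g' =>
    simp only [tiPairing_apply]
    have e1 : ∀ g : G, (op (MonoidAlgebra.of k G g') • f).app g = f.app (g * g'⁻¹) := by
      intro g
      rw [show MonoidAlgebra.of k G g' = (MonoidAlgebra.single g' 1 : MonoidAlgebra k G) from rfl,
        Coind.op_single_smul_app, one_smul]
    simp only [e1]
    refine Fintype.sum_equiv (Equiv.mulRight g'⁻¹) _ _ fun h => ?_
    simp only [Equiv.coe_mulRight]
    rw [← mul_smul, ← map_mul, inv_mul_cancel_right]
  | add r r' h h' =>
    have e1 : op (r + r') • f = op r • f + op r' • f := by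
      rw [op_add, add_smul]
    rw [e1, map_add, AddMonoidHom.add_apply, h, h', add_smul, map_add]
  | smul c r h =>
    rw [Coind.op_ksmul c r f, tiPairing_smul_left, h, smul_assoc, tiPairing_smul_right]

/-- The forward map of the tensor identity, `Coind(J) ⊗_{kG} M → J ⊗_k M`. -/
def tiTo : NCTensor (MonoidAlgebra k G) (Coind k G J) M →+ (J ⊗[k] M) :=
  QuotientAddGroup.lift _
    (TensorProduct.liftAddHom (tiPairing k G J M)
      (fun n f m => by simp only [map_zsmul, AddMonoidHom.smul_apply]))
    (by
      rw [ncTensorRel, AddSubgroup.closure_le]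
      rintro x ⟨r, f, m, rfl⟩
      simp only [SetLike.mem_coe, AddMonoidHom.mem_ker, map_sub,
        TensorProduct.liftAddHom_tmul]
      rw [tiPairing_balanced, sub_self])

@[simp] theorem tiTo_mk (f : Coind k G J) (m : M) :
    tiTo k G J M (QuotientAddGroup.mk (f ⊗ₜ[ℤ] m))
      = ∑ g : G, f.app g ⊗ₜ[k] (MonoidAlgebra.of k G g • m) := by
  rw [tiTo, QuotientAddGroup.lift_mk, TensorProduct.liftAddHom_tmul, tiPairing_apply]

/-- The inverse map of the tensor identity, `J ⊗_k M → Coind(J) ⊗_{kG} M`. -/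
def tiInv : (J ⊗[k] M) →+ NCTensor (MonoidAlgebra k G) (Coind k G J) M :=
  TensorProduct.liftAddHom
    { toFun := fun j =>
        (QuotientAddGroup.mk' _).comp
          (((TensorProduct.mk ℤ (Coind k G J) M) (deltaAt (k := k) (1 : G) j)).toAddMonoidHom)
      map_zero' := by
        ext m
        simp only [AddMonoidHom.comp_apply, LinearMap.toAddMonoidHom_coe,
          TensorProduct.mk_apply, AddMonoidHom.zero_apply]
        rw [deltaAt_zero, TensorProduct.zero_tmul, map_zero]
      map_add' := fun j j' => by
        ext m
        simp only [AddMonoidHom.comp_apply, LinearMap.toAddMonoidHom_coe,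
          TensorProduct.mk_apply, AddMonoidHom.add_apply]
        rw [deltaAt_add, TensorProduct.add_tmul, map_add] }
    (fun c j m => by
      simp only [AddMonoidHom.coe_mk, ZeroHom.coe_mk, AddMonoidHom.comp_apply,
        LinearMap.toAddMonoidHom_coe, TensorProduct.mk_apply, QuotientAddGroup.mk'_apply]
      have e1 : (deltaAt (k := k) (1 : G) (c • j) : Coind k G J)
          = op (algebraMap k (MonoidAlgebra k G) c) • deltaAt (k := k) (1 : G) j := by
        rw [algebraMap_eq_single]
        refine Coind.ext fun h => ?_
        rw [Coind.op_single_smul_app, deltaAt_app, deltaAt_app]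
        by_cases hh : h = 1 <;> simp [hh]
      rw [e1, nc_mk_rel, algebraMap_smul])

@[simp] theorem tiInv_tmul (j : J) (m : M) :
    tiInv k G J M (j ⊗ₜ[k] m)
      = QuotientAddGroup.mk ((deltaAt (k := k) (1 : G) j : Coind k G J) ⊗ₜ[ℤ] m) := by
  rw [tiInv, TensorProduct.liftAddHom_tmul]
  rfl

theorem tiTo_tiInv (z : J ⊗[k] M) : tiTo k G J M (tiInv k G J M z) = z := by
  induction z using TensorProduct.induction_on with
  | zero => simp
  | tmul j m =>
    rw [tiInv_tmul, tiTo_mk]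
    rw [Finset.sum_eq_single (1 : G)]
    · rw [deltaAt_app, if_pos rfl, map_one, one_smul]
    · intro g _ hg
      rw [deltaAt_app, if_neg hg, TensorProduct.zero_tmul]
    · intro hmem
      exact absurd (Finset.mem_univ _) hmem
  | add a b ha hb => rw [map_add, map_add, ha, hb]

theorem tiInv_tiTo (q : NCTensor (MonoidAlgebra k G) (Coind k G J) M) :
    tiInv k G J M (tiTo k G J M q) = q := by
  induction q using nc_ind with
  | zero => simp
  | tmul f m =>
    rw [tiTo_mk, map_sum]
    have e1 : ∀ g : G, tiInv k G J M (f.app g ⊗ₜ[k] (MonoidAlgebra.of k G g • m))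
        = QuotientAddGroup.mk ((deltaAt (k := k) g (f.app g) : Coind k G J) ⊗ₜ[ℤ] m) := by
      intro g
      rw [tiInv_tmul, ← nc_mk_rel, op_of_smul_deltaAt]
    rw [Finset.sum_congr rfl fun g _ => e1 g]
    have e2 : ∑ g : G,
        (QuotientAddGroup.mk ((deltaAt (k := k) g (f.app g) : Coind k G J) ⊗ₜ[ℤ] m)
          : NCTensor (MonoidAlgebra k G) (Coind k G J) M)
        = QuotientAddGroup.mk
            ((∑ g : G, (deltaAt (k := k) g (f.app g) : Coind k G J)) ⊗ₜ[ℤ] m) := by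
      rw [TensorProduct.sum_tmul]
      exact (nc_mk_sum _ _).symm
    rw [e2, sum_deltaAt]
  | add a b ha hb => rw [map_add, map_add, ha, hb]

theorem tiInv_nat {N : Type u} [AddCommGroup N] [Module k N] [Module (MonoidAlgebra k G) N]
    [IsScalarTower k (MonoidAlgebra k G) N] (f : M →ₗ[MonoidAlgebra k G] N) (f' : M →ₗ[k] N)
    (hff : ∀ m, f' m = f m) (z : J ⊗[k] M) :
    tiInv k G J N (LinearMap.lTensor J f' z)
      = ncTensorMap (MonoidAlgebra k G) (Coind k G J) f (tiInv k G J M z) := by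
  induction z using TensorProduct.induction_on with
  | zero => simp
  | tmul j m =>
    rw [LinearMap.lTensor_tmul, tiInv_tmul, tiInv_tmul, ncTensorMap_mk, hff]
  | add a b ha hb => rw [map_add, map_add, map_add, map_add, ha, hb]

theorem tiTo_nat {N : Type u} [AddCommGroup N] [Module k N] [Module (MonoidAlgebra k G) N]
    [IsScalarTower k (MonoidAlgebra k G) N] (f : M →ₗ[MonoidAlgebra k G] N) (f' : M →ₗ[k] N)
    (hff : ∀ m, f' m = f m) (q : NCTensor (MonoidAlgebra k G) (Coind k G J) M) :
    tiTo k G J N (ncTensorMap (MonoidAlgebra k G) (Coind k G J) f q)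
      = LinearMap.lTensor J f' (tiTo k G J M q) := by
  have h1 := tiInv_nat k G J M f f' hff (tiTo k G J M q)
  rw [tiInv_tiTo] at h1
  have h2 := congrArg (tiTo k G J N) h1.symm
  rwa [tiTo_tiInv] at h2

end TensorIdentity

section TiEquiv

variable (k G J)
variable (M : Type u) [AddCommGroup M] [Module k M] [Module (MonoidAlgebra k G) M]
  [IsScalarTower k (MonoidAlgebra k G) M] [Fintype G]

/-- The tensor identity `Coind(J) ⊗_{kG} M ≃ J ⊗_k M` as an additive equivalence. -/
def tiEquiv : NCTensor (MonoidAlgebra k G) (Coind k G J) M ≃+ (J ⊗[k] M) where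
  toFun := tiTo k G J M
  invFun := tiInv k G J M
  left_inv := tiInv_tiTo k G J M
  right_inv := tiTo_tiInv k G J M
  map_add' := (tiTo k G J M).map_add

@[simp] theorem tiEquiv_apply (q) : tiEquiv k G J M q = tiTo k G J M q := rfl
@[simp] theorem tiEquiv_symm_apply (z) : (tiEquiv k G J M).symm z = tiInv k G J M z := rfl

end TiEquiv

section CoindExt

variable (k G J)
variable (M : Type u) [AddCommGroup M] [Module k M] [Module (MonoidAlgebra k G) M]
  [IsScalarTower k (MonoidAlgebra k G) M]

theorem ksmul_gsmul (c : k) (x : MonoidAlgebra k G) (m : M) :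
    (c • x) • m = (MonoidAlgebra.single 1 c : MonoidAlgebra k G) • (x • m) := by
  rw [← algebraMap_eq_single, Algebra.smul_def, mul_smul]

/-- Coinduced extension of a `k`-linear map `M → J` to a `kG`-linear map `M → Coind(J)`. -/
def coindExt (ψ : M →ₗ[k] J) : M →ₗ[MonoidAlgebra k G] Coind k G J where
  toFun m := Coind.mk fun h => ψ (MonoidAlgebra.of k G h • m)
  map_add' m m' := by
    refine Coind.ext fun h => ?_
    simp [smul_add]
  map_smul' x m := by
    simp only [RingHom.id_apply]
    induction x using MonoidAlgebra.induction_on with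
    | of g =>
      refine Coind.ext fun h => ?_
      rw [Coind.of_smul_app, Coind.app_mk, Coind.app_mk, ← mul_smul, ← map_mul]
    | add x x' hx hx' =>
      refine Coind.ext fun h => ?_
      simp only [Coind.app_mk, Coind.app_add]
      rw [add_smul, smul_add, map_add]
      have ex := congrArg (fun u => Coind.app u h) hx
      have ex' := congrArg (fun u => Coind.app u h) hx'
      simp only [Coind.app_mk] at ex ex'
      rw [ex, ex',
        add_smul x x' (Coind.mk fun h => ψ (MonoidAlgebra.of k G h • m) : Coind k G J),
        Coind.app_add]
    | smul c x hx =>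
      refine Coind.ext fun h => ?_
      simp only [Coind.app_mk]
      rw [ksmul_gsmul k G M c x m]
      have e3 : MonoidAlgebra.of k G h • ((MonoidAlgebra.single 1 c : MonoidAlgebra k G) • (x • m))
          = c • (MonoidAlgebra.of k G h • (x • m)) := by
        rw [← algebraMap_eq_single, algebraMap_smul, gsmul_ksmul]
      rw [e3, map_smul]
      have ex := congrArg (fun u => Coind.app u h) hx
      simp only [Coind.app_mk] at ex
      rw [ex]
      have e5 : ((c • x) • (Coind.mk fun h => ψ (MonoidAlgebra.of k G h • m) : Coind k G J))
          = c • (x • Coind.mk fun h => ψ (MonoidAlgebra.of k G h • m)) := smul_assoc c x _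
      rw [e5, Coind.app_ksmul]

@[simp] theorem coindExt_app (ψ : M →ₗ[k] J) (m : M) (h : G) :
    (coindExt k G J M ψ m).app h = ψ (MonoidAlgebra.of k G h • m) := rfl

/-- The unit `M → Coind(M)` of coinduction. -/
def coindUnit : M →ₗ[MonoidAlgebra k G] Coind k G M := coindExt k G M M LinearMap.id

@[simp] theorem coindUnit_app (m : M) (h : G) :
    (coindUnit k G M m).app h = MonoidAlgebra.of k G h • m := rfl

theorem coindUnit_injective : Function.Injective (coindUnit k G M) := by
  intro m m' hmm
  have := congrArg (fun u => Coind.app u (1 : G)) hmm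
  simp only [coindUnit_app, map_one, one_smul] at this
  exact this

end CoindExt

section Injectivity

variable (k G J)

/-- Coinduction preserves injectivity. -/
theorem coind_injective (hJ : Module.Injective k J) :
    Module.Injective (MonoidAlgebra k G) (Coind k G J) := by
  constructor
  intro X Y _ _ _ _ f hf φ
  letI : Module k X := Module.compHom X (algebraMap k (MonoidAlgebra k G))
  letI : Module k Y := Module.compHom Y (algebraMap k (MonoidAlgebra k G))
  haveI : IsScalarTower k (MonoidAlgebra k G) X := by
    constructor
    intro c x m
    show (c • x) • m = algebraMap k (MonoidAlgebra k G) c • (x • m)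
    rw [Algebra.smul_def, mul_smul]
  haveI : IsScalarTower k (MonoidAlgebra k G) Y := by
    constructor
    intro c x m
    show (c • x) • m = algebraMap k (MonoidAlgebra k G) c • (x • m)
    rw [Algebra.smul_def, mul_smul]
  let fk : X →ₗ[k] Y :=
    { toFun := f
      map_add' := f.map_add
      map_smul' := fun c x => f.map_smul (algebraMap k (MonoidAlgebra k G) c) x }
  let ψ : X →ₗ[k] J :=
    { toFun := fun x => (φ x).app 1
      map_add' := fun x x' => by
        show (φ (x + x')).app 1 = (φ x).app 1 + (φ x').app 1
        rw [map_add, Coind.app_add]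
      map_smul' := fun c x => by
        simp only [RingHom.id_apply]
        show (φ (algebraMap k (MonoidAlgebra k G) c • x)).app 1 = c • (φ x).app 1
        rw [map_smul, algebraMap_eq_single, Coind.single_smul_app, mul_one] }
  obtain ⟨ψ', hψ'⟩ := hJ.out fk hf ψ
  refine ⟨coindExt k G J Y ψ', fun x => ?_⟩
  refine Coind.ext fun h => ?_
  rw [coindExt_app]
  have e1 : MonoidAlgebra.of k G h • f x = f (MonoidAlgebra.of k G h • x) :=
    (f.map_smul _ x).symm
  rw [e1]
  have e2 : ψ' (f (MonoidAlgebra.of k G h • x)) = ψ (MonoidAlgebra.of k G h • x) :=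
    hψ' (MonoidAlgebra.of k G h • x)
  rw [e2]
  show (φ (MonoidAlgebra.of k G h • x)).app 1 = (φ x).app h
  rw [map_smul, Coind.of_smul_app, one_mul]

/-- Restriction along `k → kG` preserves injectivity. -/
theorem res_injective (I : Type u) [AddCommGroup I] [Module (MonoidAlgebra k G) I]
    [Module k I] [IsScalarTower k (MonoidAlgebra k G) I]
    (hI : Module.Injective (MonoidAlgebra k G) I) : Module.Injective k I := by
  constructor
  intro X Y _ _ _ _ f hf g
  haveI : Module.Free k (MonoidAlgebra k G) := Module.Free.of_basis (MonoidAlgebra.basis G k)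
  haveI : Module.Flat k (MonoidAlgebra k G) := inferInstance
  have hbc : Function.Injective (LinearMap.baseChange (MonoidAlgebra k G) f) :=
    Module.Flat.lTensor_preserves_injective_linearMap (M := MonoidAlgebra k G) f hf
  haveI : SMulCommClass k (MonoidAlgebra k G) I :=
    ⟨fun c x m => (gsmul_ksmul k G I x c m).symm⟩
  let bil : (MonoidAlgebra k G) →ₗ[MonoidAlgebra k G] (X →ₗ[k] I) :=
    { toFun := fun a =>
        { toFun := fun x => a • g x
          map_add' := fun x x' => by
            show a • g (x + x') = a • g x + a • g x'
            rw [map_add, smul_add]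
          map_smul' := fun c x => by
            simp only [RingHom.id_apply]
            show a • g (c • x) = c • (a • g x)
            rw [map_smul, gsmul_ksmul k G I a c (g x)] }
      map_add' := fun a a' => by
        ext x
        simp only [LinearMap.coe_mk, AddHom.coe_mk, LinearMap.add_apply]
        rw [add_smul]
      map_smul' := fun a' a => by
        ext x
        simp only [RingHom.id_apply, LinearMap.coe_mk, AddHom.coe_mk, LinearMap.smul_apply]
        rw [smul_eq_mul, mul_smul] }
  obtain ⟨h, hh⟩ := hI.out (LinearMap.baseChange (MonoidAlgebra k G) f) hbc
    (TensorProduct.AlgebraTensorModule.lift bil)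
  refine ⟨{ toFun := fun y => h ((1 : MonoidAlgebra k G) ⊗ₜ[k] y)
            map_add' := fun y y' => by
              show h ((1 : MonoidAlgebra k G) ⊗ₜ[k] (y + y')) = _
              rw [TensorProduct.tmul_add, map_add]
            map_smul' := fun c y => by
              simp only [RingHom.id_apply]
              show h ((1 : MonoidAlgebra k G) ⊗ₜ[k] (c • y)) = c • h ((1 : MonoidAlgebra k G) ⊗ₜ[k] y)
              have e1 : (1 : MonoidAlgebra k G) ⊗ₜ[k] (c • y)
                  = algebraMap k (MonoidAlgebra k G) c • ((1 : MonoidAlgebra k G) ⊗ₜ[k] y) := by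
                rw [TensorProduct.tmul_smul, algebraMap_smul]
              rw [e1, map_smul, algebraMap_smul] }, fun x => ?_⟩
  show h ((1 : MonoidAlgebra k G) ⊗ₜ[k] f x) = g x
  have e2 : (1 : MonoidAlgebra k G) ⊗ₜ[k] f x
      = LinearMap.baseChange (MonoidAlgebra k G) f ((1 : MonoidAlgebra k G) ⊗ₜ[k] x) := by
    rw [LinearMap.baseChange_tmul]
  rw [e2, hh, TensorProduct.AlgebraTensorModule.lift_tmul]
  show (1 : MonoidAlgebra k G) • g x = g x
  rw [one_smul]

end Injectivity

section OpOf

variable (k G)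
variable {M N : Type u} [AddCommGroup M] [Module (MonoidAlgebra k G) M]
  [AddCommGroup N] [Module (MonoidAlgebra k G) N]

/-- A `kG`-linear map is also linear for the right module structures via the antipode. -/
def opOf (f : M →ₗ[MonoidAlgebra k G] N) :
    letI := rightModuleOfLeft k G M
    letI := rightModuleOfLeft k G N
    M →ₗ[(MonoidAlgebra k G)ᵐᵒᵖ] N :=
  letI := rightModuleOfLeft k G M
  letI := rightModuleOfLeft k G N
  { toFun := f
    map_add' := f.map_add
    map_smul' := fun a m => f.map_smul (antipodeOpHom k G a) m }

theorem opOf_apply (f : M →ₗ[MonoidAlgebra k G] N) (m : M) :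
    letI := rightModuleOfLeft k G M
    letI := rightModuleOfLeft k G N
    opOf k G f m = f m := rfl

end OpOf

section ModuleCatInstances

variable (k G)

instance (M : ModuleCat.{u} (MonoidAlgebra k G)) : Module k M :=
  Module.compHom _ (algebraMap k (MonoidAlgebra k G))

instance (M : ModuleCat.{u} (MonoidAlgebra k G)) : IsScalarTower k (MonoidAlgebra k G) M := by
  constructor
  intro c x m
  show (c • x) • m = algebraMap k (MonoidAlgebra k G) c • (x • m)
  rw [Algebra.smul_def, mul_smul]

end ModuleCatInstances

end Statement0Aux

end Statement0Aux

/-- Let `k` be a commutative ring and `G` a finite group. An acyclic complex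
`F` of flat `kG`-modules is totally acyclic (i.e. `I ⊗_{kG} F` is acyclic for every injective
`kG`-module `I`) if and only if the underlying acyclic complex of flat `k`-modules `res₁^G F`
is totally acyclic (i.e. `J ⊗_k F` is acyclic for every injective `k`-module `J`). -/
theorem statement_0 (k : Type u) [CommRing k] (G : Type u) [Group G] [Finite G]
    (F : RComplex (MonoidAlgebra k G)) (hac : F.Acyclic)
    (hfl : ∀ n : ℤ, ModFlat (MonoidAlgebra k G) (F.X n)) :
    RComplex.GTensorAcyclic k G F ↔
      (RComplex.res (algebraMap k (MonoidAlgebra k G)) F).CTensorAcyclic := by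
  classical
  haveI := Fintype.ofFinite G
  constructor
  · intro hG
    intro J _ _ hJinj n
    have hI := hG (Statement0Aux.Coind k G J) (Statement0Aux.coind_injective k G J hJinj) n
    exact Statement0Aux.exact_transport
      (Statement0Aux.tiEquiv k G J (F.X (n + 1 + 1)))
      (Statement0Aux.tiEquiv k G J (F.X (n + 1)))
      (Statement0Aux.tiEquiv k G J (F.X n))
      (fun a => by have e := (Statement0Aux.tiTo_nat k G J (F.X (n + 1 + 1)) (F.d (n + 1))
        (show F.X (n + 1 + 1) →ₗ[k] F.X (n + 1) from (RComplex.res (algebraMap k (MonoidAlgebra k G)) F).d (n + 1)) (fun m => rfl) a); exact e.symm)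
      (fun a => by have e := (Statement0Aux.tiTo_nat k G J (F.X (n + 1)) (F.d n)
        (show F.X (n + 1) →ₗ[k] F.X n from (RComplex.res (algebraMap k (MonoidAlgebra k G)) F).d n) (fun m => rfl) a); exact e.symm)
      hI
  · intro hres
    intro I _ instIMod hIinj
    letI : Module k I := Module.compHom I (algebraMap k (MonoidAlgebra k G))
    haveI : IsScalarTower k (MonoidAlgebra k G) I := by
      constructor
      intro c x m
      show (c • x) • m = algebraMap k (MonoidAlgebra k G) c • (x • m)
      rw [Algebra.smul_def, mul_smul]
    have hkinj : Module.Injective k I := Statement0Aux.res_injective k G I hIinj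
    letI := rightModuleOfLeft k G I
    show F.TensorAcyclic I
    intro n
    have h1 := hres I hkinj n
    have h2 : Function.Exact
        ⇑(ncTensorMap (MonoidAlgebra k G) (Statement0Aux.Coind k G I) (F.d (n + 1)))
        ⇑(ncTensorMap (MonoidAlgebra k G) (Statement0Aux.Coind k G I) (F.d n)) :=
      Statement0Aux.exact_transport
        (Statement0Aux.tiEquiv k G I (F.X (n + 1 + 1))).symm
        (Statement0Aux.tiEquiv k G I (F.X (n + 1))).symm
        (Statement0Aux.tiEquiv k G I (F.X n)).symm
        (fun z => by have e := (Statement0Aux.tiInv_nat k G I (F.X (n + 1 + 1)) (F.d (n + 1))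
          (show F.X (n + 1 + 1) →ₗ[k] F.X (n + 1) from (RComplex.res (algebraMap k (MonoidAlgebra k G)) F).d (n + 1)) (fun m => rfl) z); exact e.symm)
        (fun z => by have e := (Statement0Aux.tiInv_nat k G I (F.X (n + 1)) (F.d n)
          (show F.X (n + 1) →ₗ[k] F.X n from (RComplex.res (algebraMap k (MonoidAlgebra k G)) F).d n) (fun m => rfl) z); exact e.symm)
        h1
    obtain ⟨rmap, hrmap⟩ := hIinj.out (Statement0Aux.coindUnit k G I)
      (Statement0Aux.coindUnit_injective k G I) LinearMap.id
    exact Statement0Aux.exact_retract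
      (Statement0Aux.opOf k G (Statement0Aux.coindUnit k G I))
      (Statement0Aux.opOf k G rmap)
      (fun x => hrmap x) (F.d (n + 1)) (F.d n) (F.dsq n) h2
end

section
/- Let k be a commutative ring such that every k-module in I(k) is Gorenstein injective. Then every finite group G belongs to Y(k), i.e., every acyclic complex of injective kG-modules is totally acyclic. -/
universe u

open MulOpposite
open scoped TensorProduct

noncomputable section Helpers

namespace Stmt16

variable {R : Type u} [Ring R]

/-- Factor a linear map through a surjection whose kernel it kills. -/
def factorThru {E J M : Type u} [AddCommGroup E] [Module R E] [AddCommGroup J] [Module R J]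
    [AddCommGroup M] [Module R M] (p : E →ₗ[R] J) (hp : Function.Surjective ⇑p)
    (f : E →ₗ[R] M) (h : ∀ x, p x = 0 → f x = 0) : J →ₗ[R] M where
  toFun j := f (Function.surjInv hp j)
  map_add' j₁ j₂ := by
    have h0 : p (Function.surjInv hp (j₁ + j₂) - Function.surjInv hp j₁
        - Function.surjInv hp j₂) = 0 := by
      simp [Function.surjInv_eq hp]
    have := h _ h0
    rw [map_sub, map_sub, sub_sub, sub_eq_zero] at this
    show f _ = f _ + f _
    rw [this]
  map_smul' c j := by
    have h0 : p (Function.surjInv hp (c • j) - c • Function.surjInv hp j) = 0 := by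
      simp [Function.surjInv_eq hp]
    have := h _ h0
    rw [map_sub, map_smul, sub_eq_zero] at this
    show f _ = c • f _
    rw [this]

theorem factorThru_apply {E J M : Type u} [AddCommGroup E] [Module R E] [AddCommGroup J]
    [Module R J] [AddCommGroup M] [Module R M] (p : E →ₗ[R] J) (hp : Function.Surjective ⇑p)
    (f : E →ₗ[R] M) (h : ∀ x, p x = 0 → f x = 0) (x : E) :
    factorThru p hp f h (p x) = f x := by
  have h0 : p (Function.surjInv hp (p x) - x) = 0 := by
    simp [Function.surjInv_eq hp]
  have := h _ h0
  simp only [map_sub, sub_eq_zero] at this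
  exact this

/-- If `N` is Gorenstein injective and `J` is injective, then `Ext¹(J, N) = 0`. -/
theorem isGInj_ext1 {N : Type u} [AddCommGroup N] [Module R N]
    (hN : IsGInj R N) {J : Type u} [AddCommGroup J] [Module R J]
    (hJ : Module.Injective R J) : Ext1Vanish R J N := by
  obtain ⟨D, ⟨hDac, hDinj, hDtot⟩, m, ⟨e⟩⟩ := hN
  obtain ⟨m₀, rfl⟩ : ∃ m₀, m = m₀ + 1 := ⟨m - 1, by omega⟩
  intro E i p hi hp hexact
  -- the inclusion of `N` into `D.X (m+1)` via `e.symm`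
  set ι : N →ₗ[R] D.X (m₀ + 1 + 1) :=
    (LinearMap.ker (D.d (m₀ + 1))).subtype.comp (e.symm : N →ₗ[R] LinearMap.ker (D.d (m₀ + 1))) with hι
  have hι0 : ∀ x : N, D.d (m₀ + 1) (ι x) = 0 := fun x => (e.symm x).2
  -- extend along `i` using injectivity of `D.X (m+1)`
  obtain ⟨φ, hφ⟩ := (hDinj (m₀ + 1 + 1)).out i hi ι
  -- factor `D.d (m₀ + 1) ∘ φ` through `p`
  have hker : ∀ x : E, p x = 0 → ((D.d (m₀ + 1)).comp φ) x = 0 := by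
    intro x hx
    obtain ⟨y, rfl⟩ := (hexact x).mp hx
    simp only [LinearMap.comp_apply, hφ]
    exact hι0 y
  set ψ : J →ₗ[R] D.X (m₀ + 1) := factorThru p hp ((D.d (m₀ + 1)).comp φ) hker with hψ
  -- total acyclicity of `Hom(J, D)` at spot `m - 1`
  have hHFA := hDtot J hJ m₀
  have hdsq := D.dsq m₀
  have hψ0 : (postcompAM J (D.d m₀)) ψ = 0 := by
    show (D.d m₀).comp ψ = 0
    ext j
    obtain ⟨x, rfl⟩ := hp j
    simp only [LinearMap.comp_apply, LinearMap.zero_apply, hψ,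
      factorThru_apply p hp ((D.d (m₀ + 1)).comp φ) hker x]
    exact DFunLike.congr_fun hdsq (φ x)
  obtain ⟨χ, hχ⟩ := (hHFA ψ).mp hψ0
  replace hχ : (D.d (m₀ + 1)).comp χ = ψ := hχ
  -- the corrected map `E → N`
  set s₀ : E →ₗ[R] D.X (m₀ + 1 + 1) := φ - χ.comp p with hs₀
  have hmem : ∀ x : E, s₀ x ∈ LinearMap.ker (D.d (m₀ + 1)) := by
    intro x
    simp only [LinearMap.mem_ker, hs₀, LinearMap.sub_apply, map_sub, LinearMap.comp_apply]
    have : D.d (m₀ + 1) (χ (p x)) = ψ (p x) := DFunLike.congr_fun hχ (p x)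
    rw [this, hψ, factorThru_apply p hp ((D.d (m₀ + 1)).comp φ) hker x, LinearMap.comp_apply, sub_self]
  set r : E →ₗ[R] N :=
    (e : LinearMap.ker (D.d (m₀ + 1)) →ₗ[R] N).comp (LinearMap.codRestrict _ s₀ hmem) with hr
  have hri : ∀ x : N, r (i x) = x := by
    intro x
    have hpi : p (i x) = 0 := (hexact (i x)).mpr ⟨x, rfl⟩
    have hs : s₀ (i x) = ι x := by
      simp only [hs₀, LinearMap.sub_apply, LinearMap.comp_apply, hpi, map_zero, sub_zero, hφ]
    have : LinearMap.codRestrict _ s₀ hmem (i x) = e.symm x := by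
      apply Subtype.ext
      exact hs
    simp only [hr, LinearMap.comp_apply, this, LinearEquiv.coe_coe, LinearEquiv.apply_symm_apply]
  -- build the section of `p`
  set t : E →ₗ[R] E := LinearMap.id - i.comp r with ht
  have htker : ∀ x : E, p x = 0 → t x = 0 := by
    intro x hx
    obtain ⟨y, rfl⟩ := (hexact x).mp hx
    simp only [ht, LinearMap.sub_apply, LinearMap.id_apply, LinearMap.comp_apply, hri, sub_self]
  refine ⟨factorThru p hp t htker, ?_⟩
  ext j
  obtain ⟨x, rfl⟩ := hp j
  simp only [LinearMap.comp_apply, LinearMap.id_apply,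
    factorThru_apply p hp t htker x, ht, LinearMap.sub_apply, LinearMap.id_apply, map_sub]
  have : p (i (r x)) = 0 := (hexact (i (r x))).mpr ⟨r x, rfl⟩
  rw [factorThru_apply p hp (LinearMap.id - i ∘ₗ r) htker x]
  simp only [LinearMap.sub_apply, LinearMap.id_apply, LinearMap.comp_apply, map_sub, this, sub_zero]

/-- If `Ext¹(J, ker p)` vanishes then maps into the target of a surjection `p` lift. -/
theorem lift_of_ext1Vanish {X Nm J : Type u} [AddCommGroup X] [Module R X]
    [AddCommGroup Nm] [Module R Nm] [AddCommGroup J] [Module R J]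
    (p : X →ₗ[R] Nm) (hp : Function.Surjective ⇑p)
    (hext : Ext1Vanish R J ↥(LinearMap.ker p)) (u : J →ₗ[R] Nm) :
    ∃ w : J →ₗ[R] X, p.comp w = u := by
  set q : X × J →ₗ[R] Nm :=
    p.comp (LinearMap.fst R X J) - u.comp (LinearMap.snd R X J) with hq
  set E := LinearMap.ker q with hE
  have hmem : ∀ y : X × J, y ∈ E ↔ p y.1 = u y.2 := by
    intro y
    simp [hE, hq, LinearMap.mem_ker, sub_eq_zero]
  set i : ↥(LinearMap.ker p) →ₗ[R] ↥E :=
    LinearMap.codRestrict E ((LinearMap.inl R X J).comp (LinearMap.ker p).subtype)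
      (fun x => by simp [hmem, x.2.out]) with hi'
  set pr : ↥E →ₗ[R] J := (LinearMap.snd R X J).comp E.subtype with hpr'
  have hi : Function.Injective ⇑i := by
    intro a b hab
    apply Subtype.ext
    exact congrArg Prod.fst (congrArg (Subtype.val : ↥E → X × J) hab)
  have hpr : Function.Surjective ⇑pr := by
    intro j
    obtain ⟨x, hx⟩ := hp (u j)
    exact ⟨⟨(x, j), (hmem (x, j)).mpr hx⟩, rfl⟩
  have hexact : Function.Exact ⇑i ⇑pr := by
    intro y
    constructor
    · intro hy
      have h1 : p y.1.1 = 0 := by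
        have := (hmem y.1).mp y.2
        rw [this]
        have : (y : X × J).2 = pr y := rfl
        rw [this, hy, map_zero]
      refine ⟨⟨y.1.1, LinearMap.mem_ker.mpr h1⟩, ?_⟩
      apply Subtype.ext
      have h2 : (y : X × J).2 = 0 := hy
      ext
      · rfl
      · exact h2.symm
    · rintro ⟨z, rfl⟩
      rfl
  obtain ⟨s, hs⟩ := hext (ModuleCat.of R ↥E) i pr hi hpr hexact
  refine ⟨(LinearMap.fst R X J).comp (E.subtype.comp s), ?_⟩
  ext j
  have h1 : p (E.subtype (s j)).1 = u (E.subtype (s j)).2 := (hmem _).mp (s j).2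
  show p (E.subtype (s j)).1 = u j
  rw [h1]
  exact congrArg u (DFunLike.congr_fun hs j)

section AlgebraHelpers

variable {k : Type u} [CommRing k] {A : Type u} [Ring A] [Algebra k A]

theorem smulCommClass_of_tower (M : Type u) [AddCommGroup M] [Module A M] [Module k M]
    [IsScalarTower k A M] : SMulCommClass k A M :=
  ⟨fun c a m => by
    rw [← algebraMap_smul A c m, ← algebraMap_smul A c (a • m), ← mul_smul, ← mul_smul,
      Algebra.commutes]⟩

variable {M : Type u} [AddCommGroup M] [Module A M] [Module k M] [IsScalarTower k A M]

/-- Extend a `k`-linear map `J → M` to an `A`-linear map `A ⊗[k] J → M`. -/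
def inducedLift {J : Type u} [AddCommGroup J] [Module k J] (w : J →ₗ[k] M) :
    A ⊗[k] J →ₗ[A] M :=
  haveI := smulCommClass_of_tower (k := k) (A := A) M
  let B : A →ₗ[k] J →ₗ[k] M :=
    { toFun := fun b =>
        { toFun := fun x => b • w x
          map_add' := fun x y => by
            show b • w (x + y) = b • w x + b • w y
            rw [map_add, smul_add]
          map_smul' := fun c x => by
            show b • w (c • x) = c • (b • w x)
            rw [map_smul]
            exact smul_comm b c (w x) }
      map_add' := fun b₁ b₂ => LinearMap.ext fun x => add_smul b₁ b₂ (w x)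
      map_smul' := fun c b => LinearMap.ext fun x => smul_assoc c b (w x) }
  let H₀ := TensorProduct.lift B
  { toFun := H₀
    map_add' := map_add H₀
    map_smul' := fun a t => by
      rw [RingHom.id_apply]
      show H₀ (a • t) = a • H₀ t
      induction t using TensorProduct.induction_on with
      | zero => rw [smul_zero, map_zero, smul_zero]
      | tmul b x =>
          rw [TensorProduct.smul_tmul', smul_eq_mul]
          have h1 : H₀ ((a * b) ⊗ₜ[k] x) = (a * b) • w x := TensorProduct.lift.tmul _ _
          have h2 : H₀ (b ⊗ₜ[k] x) = b • w x := TensorProduct.lift.tmul _ _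
          rw [h1, h2, mul_smul]
      | add t₁ t₂ h₁ h₂ => rw [smul_add, map_add, map_add, h₁, h₂, smul_add] }

theorem inducedLift_tmul {J : Type u} [AddCommGroup J] [Module k J] (w : J →ₗ[k] M)
    (b : A) (x : J) : inducedLift w (b ⊗ₜ[k] x) = b • w x := rfl

/-- `lTensor` as an `A`-linear map. -/
def lTensorA {X Y : Type u} [AddCommGroup X] [Module k X] [AddCommGroup Y] [Module k Y]
    (f : X →ₗ[k] Y) : A ⊗[k] X →ₗ[A] A ⊗[k] Y :=
  { LinearMap.lTensor A f with
    map_smul' := fun a t => by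
      rw [RingHom.id_apply]
      show LinearMap.lTensor A f (a • t) = a • LinearMap.lTensor A f t
      induction t using TensorProduct.induction_on with
      | zero => rw [smul_zero, map_zero, smul_zero]
      | tmul b x =>
          rw [TensorProduct.smul_tmul', smul_eq_mul]
          rw [LinearMap.lTensor_tmul, LinearMap.lTensor_tmul, TensorProduct.smul_tmul',
            smul_eq_mul]
      | add t₁ t₂ h₁ h₂ =>
          rw [smul_add, map_add, map_add, h₁, h₂, smul_add] }

theorem lTensorA_coe {X Y : Type u} [AddCommGroup X] [Module k X] [AddCommGroup Y] [Module k Y]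
    (f : X →ₗ[k] Y) (t : A ⊗[k] X) : lTensorA (A := A) f t = LinearMap.lTensor A f t := rfl

/-- A module injective over a `k`-algebra that is flat over `k` is injective over `k`. -/
theorem injective_of_restrict [Module.Flat k A] (hM : Module.Injective A M) :
    Module.Injective k M := by
  constructor
  intro X Y _ _ _ _ f hf g
  have hinj : Function.Injective ⇑(lTensorA (A := A) f) :=
    Module.Flat.lTensor_preserves_injective_linearMap f hf
  obtain ⟨h', hh'⟩ := hM.out (lTensorA (A := A) f) hinj (inducedLift g)
  refine ⟨(LinearMap.restrictScalars k h').comp ((TensorProduct.mk k A Y) 1), fun x => ?_⟩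
  show h' ((1 : A) ⊗ₜ[k] f x) = g x
  have h1 : (1 : A) ⊗ₜ[k] f x = lTensorA (A := A) f ((1 : A) ⊗ₜ[k] x) := rfl
  rw [h1, hh']
  show (1 : A) • g x = g x
  rw [one_smul]

end AlgebraHelpers

section Frobenius

variable (k : Type u) [CommRing k] (G : Type u) [Group G]

/-- Multiplication action on a fixed element, as a `k`-linear map on the group algebra. -/
def actLin (M : Type u) [AddCommGroup M] [Module (MonoidAlgebra k G) M] [Module k M]
    [IsScalarTower k (MonoidAlgebra k G) M] (x : M) : MonoidAlgebra k G →ₗ[k] M where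
  toFun a := a • x
  map_add' a b := add_smul a b x
  map_smul' c a := by
    rw [RingHom.id_apply]
    exact smul_assoc c a x

variable (I : Type u) [AddCommGroup I] [Module (MonoidAlgebra k G) I] [Module k I]
  [IsScalarTower k (MonoidAlgebra k G) I]

variable [Fintype G]

/-- The `k`-linear Frobenius map `x ↦ ∑ s, s ⊗ s⁻¹ x`. -/
def frobAux : I →ₗ[k] MonoidAlgebra k G ⊗[k] I :=
  ∑ s : G, (TensorProduct.mk k (MonoidAlgebra k G) I (MonoidAlgebra.of k G s)).comp
    (gEnd k G I s⁻¹)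

theorem frobAux_apply (x : I) :
    frobAux k G I x
      = ∑ s : G, (MonoidAlgebra.of k G s) ⊗ₜ[k] ((MonoidAlgebra.of k G s⁻¹) • x) := by
  simp only [frobAux, LinearMap.sum_apply, LinearMap.comp_apply, TensorProduct.mk_apply]
  rfl

theorem frobAux_of_smul (g : G) (x : I) :
    frobAux k G I ((MonoidAlgebra.of k G g) • x)
      = (MonoidAlgebra.of k G g) • frobAux k G I x := by
  rw [frobAux_apply, frobAux_apply, Finset.smul_sum]
  refine Fintype.sum_equiv (Equiv.mulLeft g⁻¹) _ _ fun t => ?_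
  show (MonoidAlgebra.of k G t) ⊗ₜ[k]
      ((MonoidAlgebra.of k G t⁻¹) • ((MonoidAlgebra.of k G g) • x))
    = (MonoidAlgebra.of k G g) • ((MonoidAlgebra.of k G (g⁻¹ * t)) ⊗ₜ[k]
        ((MonoidAlgebra.of k G (g⁻¹ * t)⁻¹) • x))
  rw [TensorProduct.smul_tmul', smul_eq_mul, ← map_mul, mul_inv_cancel_left, ← mul_smul,
    ← map_mul, mul_inv_rev, inv_inv]

/-- The Frobenius map as a `kG`-linear map. -/
def frobMap : I →ₗ[MonoidAlgebra k G] MonoidAlgebra k G ⊗[k] I :=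
  { frobAux k G I with
    map_smul' := fun a x => by
      rw [RingHom.id_apply]
      show frobAux k G I (a • x) = a • frobAux k G I x
      have key : (frobAux k G I).comp (actLin k G I x) =
          actLin k G (MonoidAlgebra k G ⊗[k] I) (frobAux k G I x) := by
        apply MonoidAlgebra.lhom_ext'
        intro g
        apply LinearMap.ext_ring
        show frobAux k G I ((MonoidAlgebra.of k G g) • x)
          = (MonoidAlgebra.of k G g) • frobAux k G I x
        exact frobAux_of_smul k G I g x
      exact DFunLike.congr_fun key a }

theorem frobMap_apply (x : I) :
    frobMap k G I x
      = ∑ s : G, (MonoidAlgebra.of k G s) ⊗ₜ[k] ((MonoidAlgebra.of k G s⁻¹) • x) :=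
  frobAux_apply k G I x

/-- Retraction showing the Frobenius map is injective. -/
def frobRetr : MonoidAlgebra k G ⊗[k] I →ₗ[k] I :=
  TensorProduct.lift
    { toFun := fun b => (b.coeff 1 : k) • (LinearMap.id : I →ₗ[k] I)
      map_add' := fun b₁ b₂ => LinearMap.ext fun y => by
        show ((b₁ + b₂).coeff 1) • y = (b₁.coeff 1) • y + (b₂.coeff 1) • y
        rw [MonoidAlgebra.coeff_add, Finsupp.add_apply, add_smul]
      map_smul' := fun c b => LinearMap.ext fun y => by
        show ((c • b).coeff 1) • y = c • ((b.coeff 1) • y)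
        rw [MonoidAlgebra.coeff_smul, Finsupp.smul_apply, smul_eq_mul, mul_smul] }

theorem frobRetr_frobMap (x : I) : frobRetr k G I (frobMap k G I x) = x := by
  classical
  rw [frobMap_apply, map_sum]
  have h1 : ∀ s : G, frobRetr k G I
      ((MonoidAlgebra.of k G s) ⊗ₜ[k] ((MonoidAlgebra.of k G s⁻¹) • x))
      = ((MonoidAlgebra.of k G s : MonoidAlgebra k G).coeff 1 : k)
          • ((MonoidAlgebra.of k G s⁻¹) • x) := fun s => rfl
  simp only [h1]
  have h2 : ∀ s : G, ((MonoidAlgebra.of k G s : MonoidAlgebra k G).coeff 1 : k)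
      = if s = 1 then 1 else 0 := by
    intro s
    rw [MonoidAlgebra.of_apply]
    exact Finsupp.single_apply
  simp only [h2, ite_smul, one_smul, zero_smul]
  rw [Finset.sum_ite_eq' Finset.univ (1 : G)
    (fun s => (MonoidAlgebra.of k G s⁻¹) • x)]
  simp only [Finset.mem_univ, if_true, inv_one]
  rw [MonoidAlgebra.of_apply, ← MonoidAlgebra.one_def, one_smul]

theorem frobMap_injective : Function.Injective ⇑(frobMap k G I) :=
  Function.LeftInverse.injective (g := frobRetr k G I) (frobRetr_frobMap k G I)

end Frobenius

/-- The scalar tower for restriction of scalars along `algebraMap`. -/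
theorem restrict_tower (k : Type u) [CommRing k] {A : Type u} [Ring A] [Algebra k A]
    (M : ModuleCat.{u} A) :
    IsScalarTower k A ((ModuleCat.restrictScalars (algebraMap k A)).obj M) :=
  ⟨fun c a x => by
    show ((c • a) : A) • x = algebraMap k A c • ((a • x : M))
    rw [Algebra.smul_def, mul_smul]⟩

end Stmt16

end Helpers

/-- Let `k` be a commutative ring such that every `k`-module in `I(k)` is
Gorenstein injective. Then every finite group `G` belongs to `Y(k)`. -/
theorem statement_16 (k : Type u) [CommRing k]
    (hk : ∀ (M : Type u) [AddCommGroup M] [Module k M], MemI k M → IsGInj k M)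
    (G : Type u) [Group G] [Finite G] : YProp k G := by
  classical
  letI : Fintype G := Fintype.ofFinite G
  letI : Module.Free k (MonoidAlgebra k G) := inferInstance
  letI : Module.Flat k (MonoidAlgebra k G) := inferInstance
  intro C hac hinj I _iac _imod hI n
  -- the restricted complex over k
  have hack : (C.res (algebraMap k (MonoidAlgebra k G))).Acyclic := fun m => hac m
  have hinjCk : (C.res (algebraMap k (MonoidAlgebra k G))).InjComps := by
    intro m
    letI := Stmt16.restrict_tower k (C.X m)
    show Module.Injective k
      ↥((ModuleCat.restrictScalars (algebraMap k (MonoidAlgebra k G))).obj (C.X m))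
    exact @Stmt16.injective_of_restrict k _ _ _ _ _ _ _ _ (Stmt16.restrict_tower k (C.X m)) _ (hinj m)
  -- the k-level lifting step
  have kstep : ∀ (m : ℤ) (J : Type u) [AddCommGroup J] [Module k J], Module.Injective k J →
      ∀ u : J →ₗ[k]
          ↥((ModuleCat.restrictScalars (algebraMap k (MonoidAlgebra k G))).obj (C.X (m + 1))),
        (((C.res (algebraMap k (MonoidAlgebra k G))).d m).comp u
            = 0) →
          ∃ w : J →ₗ[k]
              ↥((ModuleCat.restrictScalars (algebraMap k (MonoidAlgebra k G))).obj
                (C.X (m + 1 + 1))),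
            ((C.res (algebraMap k (MonoidAlgebra k G))).d (m + 1)).comp w = u := by
    intro m J _ _ hJ u hu
    set D := (C.res (algebraMap k (MonoidAlgebra k G))).d (m + 1)
      with hD
    have hps : Function.Surjective ⇑D.rangeRestrict := LinearMap.surjective_rangeRestrict _
    have hker : Ext1Vanish k J ↥(LinearMap.ker D.rangeRestrict) := by
      apply Stmt16.isGInj_ext1 _ hJ
      apply hk
      refine ⟨C.res (algebraMap k (MonoidAlgebra k G)), hack, hinjCk,
        ⟨m + 1, ⟨LinearEquiv.ofEq _ _ ?_⟩⟩⟩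
      exact (LinearMap.ker_rangeRestrict D).symm
    have hmem : ∀ x : J, u x ∈ LinearMap.range D := by
      intro x
      have h0 := DFunLike.congr_fun hu x
      exact (hack m (u x)).mp h0
    obtain ⟨w, hw⟩ := Stmt16.lift_of_ext1Vanish D.rangeRestrict hps hker
      (LinearMap.codRestrict _ u hmem)
    refine ⟨w, ?_⟩
    ext x
    exact congrArg Subtype.val (DFunLike.congr_fun hw x)
  -- now total acyclicity over the group algebra
  intro g
  constructor
  · -- the main direction
    intro hg
    have hg' : (C.d n).comp g = 0 := hg
    letI : Module k I := Module.compHom I (algebraMap k (MonoidAlgebra k G))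
    letI : IsScalarTower k (MonoidAlgebra k G) I :=
      ⟨fun c a x => by
        show ((c • a) : MonoidAlgebra k G) • x = algebraMap k (MonoidAlgebra k G) c • (a • x)
        rw [Algebra.smul_def, mul_smul]⟩
    letI := Stmt16.restrict_tower k (C.X (n + 1))
    letI := Stmt16.restrict_tower k (C.X (n + 1 + 1))
    have hIinjk : Module.Injective k I := Stmt16.injective_of_restrict hI
    obtain ⟨π, hπ⟩ := hI.out (Stmt16.frobMap k G I) (Stmt16.frobMap_injective k G I)
      (LinearMap.id (R := MonoidAlgebra k G) (M := I))
    let u : I →ₗ[k]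
        ↥((ModuleCat.restrictScalars (algebraMap k (MonoidAlgebra k G))).obj (C.X (n + 1))) :=
      (LinearMap.restrictScalars k
        (show (MonoidAlgebra k G) ⊗[k] I →ₗ[MonoidAlgebra k G]
            ↥((ModuleCat.restrictScalars (algebraMap k (MonoidAlgebra k G))).obj (C.X (n + 1)))
          from g.comp π)).comp ((TensorProduct.mk k (MonoidAlgebra k G) I) 1)
    have hu : (((C.res (algebraMap k (MonoidAlgebra k G))).d n).comp u) = 0 := by
      ext x
      show (C.d n) (g (π ((1 : MonoidAlgebra k G) ⊗ₜ[k] x))) = 0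
      exact DFunLike.congr_fun hg' (π ((1 : MonoidAlgebra k G) ⊗ₜ[k] x))
    obtain ⟨w, hw⟩ := kstep n I hIinjk u hu
    let H := Stmt16.inducedLift (A := MonoidAlgebra k G)
      (M := ↥((ModuleCat.restrictScalars (algebraMap k (MonoidAlgebra k G))).obj
        (C.X (n + 1 + 1)))) w
    refine ⟨H.comp (Stmt16.frobMap k G I), ?_⟩
    show (C.d (n + 1)).comp (H.comp (Stmt16.frobMap k G I)) = g
    ext x
    show (C.d (n + 1)) (H (Stmt16.frobMap k G I x)) = g x
    have hterm : ∀ s : G,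
        (C.d (n + 1)) (H ((MonoidAlgebra.of k G s) ⊗ₜ[k] ((MonoidAlgebra.of k G s⁻¹) • x)))
          = (MonoidAlgebra.of k G s) •
              g (π ((1 : MonoidAlgebra k G) ⊗ₜ[k] ((MonoidAlgebra.of k G s⁻¹) • x))) := by
      intro s
      have h1 : H ((MonoidAlgebra.of k G s) ⊗ₜ[k] ((MonoidAlgebra.of k G s⁻¹) • x))
          = (MonoidAlgebra.of k G s) • w ((MonoidAlgebra.of k G s⁻¹) • x) :=
        Stmt16.inducedLift_tmul w _ _
      rw [h1]
      erw [(C.d (n + 1)).map_smul]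
      have h2 : (C.d (n + 1)) (w ((MonoidAlgebra.of k G s⁻¹) • x))
          = u ((MonoidAlgebra.of k G s⁻¹) • x) :=
        DFunLike.congr_fun hw ((MonoidAlgebra.of k G s⁻¹) • x)
      rw [h2]
      rfl
    have hright : g x = ∑ s : G, (MonoidAlgebra.of k G s) •
        g (π ((1 : MonoidAlgebra k G) ⊗ₜ[k] ((MonoidAlgebra.of k G s⁻¹) • x))) := by
      have h0 : π (Stmt16.frobMap k G I x) = x := hπ x
      have h4 : g x = g (π (Stmt16.frobMap k G I x)) := by rw [h0]
      rw [h4, Stmt16.frobMap_apply, map_sum, map_sum]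
      refine Finset.sum_congr rfl fun s _ => ?_
      have h3 : (MonoidAlgebra.of k G s) ⊗ₜ[k] ((MonoidAlgebra.of k G s⁻¹) • x)
          = (MonoidAlgebra.of k G s) •
              ((1 : MonoidAlgebra k G) ⊗ₜ[k] ((MonoidAlgebra.of k G s⁻¹) • x)) := by
        rw [TensorProduct.smul_tmul', smul_eq_mul, mul_one]
      rw [h3, map_smul, map_smul]
    rw [Stmt16.frobMap_apply, map_sum H]
    erw [map_sum (C.d (n + 1))]
    rw [hright]
    exact Finset.sum_congr rfl fun s _ => hterm s
  · rintro ⟨h', rfl⟩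
    show (C.d n).comp ((C.d (n + 1)).comp h') = 0
    ext x
    show (C.d n) ((C.d (n + 1)) (h' x)) = 0
    exact DFunLike.congr_fun (C.dsq n) (h' x)
end
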